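/- In the tableau system for LBF, for every tableau T and every node v = (w, Γ, σ) of T, if v is a leaf then either Γ contains only literals or at least one tableau rule among (∧), (∨), (∃), (∀), (◇), (END) can be applied at v. Consequently every partial tableau for an LBF formula can be extended to a saturated tableau. -/

import Mathlib

set_option maxHeartbeats 1000000

/-! ## Syntax of first-order modal logic (FOML)

Predicate symbols and variables are represented by natural numbers; an atom
`atom p args` applies the predicate symbol `p` to the list of variables `args`
(the arity of `p` in this occurrence is the length of `args`). -/
inductive Formula : Type where
  | atom (p : ℕ) (args : List ℕ)
  | neg  (φ : Formula)
  | and  (φ ψ : Formula)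
  | or   (φ ψ : Formula)
  | box  (φ : Formula)
  | dia  (φ : Formula)
  | ex   (x : ℕ) (φ : Formula)
  | all  (x : ℕ) (φ : Formula)
deriving DecidableEq

namespace Formula

def imp (φ ψ : Formula) : Formula := .or φ.neg ψ
def biimp (φ ψ : Formula) : Formula := .and (imp φ ψ) (imp ψ φ)
/-- a fixed tautology `⊤` -/
def top : Formula := .or (.atom 0 []) (.neg (.atom 0 []))
/-- a fixed contradiction `⊥` -/
def bot : Formula := .and (.atom 0 []) (.neg (.atom 0 []))

end Formula

def bigAnd (l : List Formula) : Formula := l.foldr Formula.and Formula.top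
def bigOr  (l : List Formula) : Formula := l.foldr Formula.or Formula.bot

/-! ## Semantics: Kripke structures with world-relative domains -/

structure Model where
  W : Type
  D : Type
  R : W → W → Prop
  dom : W → Set D
  ρ : W → ℕ → Set (List D)

/-- `M` is an increasing domain model: nonempty countable set of worlds, nonempty
countable domain, nonempty local domains that increase along the accessibility
relation, and interpretations of predicates at a world take values in the local
domain of that world. -/
def Model.Increasing (M : Model) : Prop :=
  Nonempty M.W ∧ Nonempty M.D ∧ Countable M.W ∧ Countable M.D ∧
    (∀ w, (M.dom w).Nonempty) ∧
    (∀ w v, M.R w v → M.dom w ⊆ M.dom v) ∧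
    (∀ w p l, l ∈ M.ρ w p → ∀ d ∈ l, d ∈ M.dom w)

def Model.sat (M : Model) : M.W → (ℕ → M.D) → Formula → Prop
  | w, σ, .atom p args => args.map σ ∈ M.ρ w p
  | w, σ, .neg φ => ¬ M.sat w σ φ
  | w, σ, .and φ ψ => M.sat w σ φ ∧ M.sat w σ ψ
  | w, σ, .or φ ψ => M.sat w σ φ ∨ M.sat w σ ψ
  | w, σ, .box φ => ∀ v, M.R w v → M.sat v σ φ
  | w, σ, .dia φ => ∃ v, M.R w v ∧ M.sat v σ φ
  | w, σ, .ex x φ => ∃ d ∈ M.dom w, M.sat w (Function.update σ x d) φ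
  | w, σ, .all x φ => ∀ d ∈ M.dom w, M.sat w (Function.update σ x d) φ

/-- the assignment `σ` is relevant at the world `w` -/
def Model.relevant (M : Model) (w : M.W) (σ : ℕ → M.D) : Prop := ∀ x, σ x ∈ M.dom w

/-- satisfiability over increasing domain models -/
def Satisfiable (φ : Formula) : Prop :=
  ∃ (M : Model), M.Increasing ∧ ∃ (w : M.W) (σ : ℕ → M.D), M.relevant w σ ∧ M.sat w σ φ
/-! ## Free and bound variables, cleanliness, substitution, α-equivalence -/

namespace Formula

def fv : Formula → Finset ℕ
  | .atom _ args => args.toFinset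
  | .neg φ => φ.fv
  | .and φ ψ => φ.fv ∪ ψ.fv
  | .or φ ψ => φ.fv ∪ ψ.fv
  | .box φ => φ.fv
  | .dia φ => φ.fv
  | .ex x φ => φ.fv.erase x
  | .all x φ => φ.fv.erase x

def bv : Formula → Finset ℕ
  | .atom _ _ => ∅
  | .neg φ => φ.bv
  | .and φ ψ => φ.bv ∪ ψ.bv
  | .or φ ψ => φ.bv ∪ ψ.bv
  | .box φ => φ.bv
  | .dia φ => φ.bv
  | .ex x φ => insert x φ.bv
  | .all x φ => insert x φ.bv

/-- every use of a quantifier in the formula quantifies a distinct variable -/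
def uniqueBinders : Formula → Prop
  | .atom _ _ => True
  | .neg φ => φ.uniqueBinders
  | .and φ ψ => φ.uniqueBinders ∧ ψ.uniqueBinders ∧ Disjoint φ.bv ψ.bv
  | .or φ ψ => φ.uniqueBinders ∧ ψ.uniqueBinders ∧ Disjoint φ.bv ψ.bv
  | .box φ => φ.uniqueBinders
  | .dia φ => φ.uniqueBinders
  | .ex x φ => φ.uniqueBinders ∧ x ∉ φ.bv
  | .all x φ => φ.uniqueBinders ∧ x ∉ φ.bv

/-- a formula is clean if no variable occurs both bound and free in it and
every use of a quantifier quantifies a distinct variable -/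
def Clean (φ : Formula) : Prop := φ.uniqueBinders ∧ Disjoint φ.fv φ.bv

/-- `φ.subst y z` is `φ[z/y]`: replace every free occurrence of `y` by `z` -/
def subst (y z : ℕ) : Formula → Formula
  | .atom p args => .atom p (args.map fun v => if v = y then z else v)
  | .neg φ => .neg (φ.subst y z)
  | .and φ ψ => .and (φ.subst y z) (ψ.subst y z)
  | .or φ ψ => .or (φ.subst y z) (ψ.subst y z)
  | .box φ => .box (φ.subst y z)
  | .dia φ => .dia (φ.subst y z)
  | .ex x φ => if x = y then .ex x φ else .ex x (φ.subst y z)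
  | .all x φ => if x = y then .all x φ else .all x (φ.subst y z)

def isLiteralB : Formula → Bool
  | .atom _ _ => true
  | .neg (.atom _ _) => true
  | _ => false

/-- a module is a literal, a `□`-formula, or a `◇`-formula -/
def isModuleB : Formula → Bool
  | .box _ => true
  | .dia _ => true
  | φ => φ.isLiteralB

/-- the component set `C(φ)` of a formula -/
def comps : Formula → Finset Formula
  | .and φ ψ => φ.comps ∪ ψ.comps
  | .or φ ψ => φ.comps ∪ ψ.comps
  | .ex x φ => insert (.ex x φ) φ.comps
  | .all x φ => insert (.all x φ) φ.comps
  | φ => {φ}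

end Formula

/-- α-equivalence (renaming of bound variables) -/
inductive AlphaEq : Formula → Formula → Prop where
  | atom (p : ℕ) (args : List ℕ) : AlphaEq (.atom p args) (.atom p args)
  | neg {φ φ'} : AlphaEq φ φ' → AlphaEq (.neg φ) (.neg φ')
  | and {φ φ' ψ ψ'} : AlphaEq φ φ' → AlphaEq ψ ψ' → AlphaEq (.and φ ψ) (.and φ' ψ')
  | or {φ φ' ψ ψ'} : AlphaEq φ φ' → AlphaEq ψ ψ' → AlphaEq (.or φ ψ) (.or φ' ψ')
  | box {φ φ'} : AlphaEq φ φ' → AlphaEq (.box φ) (.box φ')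
  | dia {φ φ'} : AlphaEq φ φ' → AlphaEq (.dia φ) (.dia φ')
  | ex {x x' : ℕ} {φ φ'}
      (h : ∀ z, z ∉ φ.bv ∪ φ'.bv → AlphaEq (φ.subst x z) (φ'.subst x' z)) :
      AlphaEq (.ex x φ) (.ex x' φ')
  | all {x x' : ℕ} {φ φ'}
      (h : ∀ z, z ∉ φ.bv ∪ φ'.bv → AlphaEq (φ.subst x z) (φ'.subst x' z)) :
      AlphaEq (.all x φ) (.all x' φ')

/-- a finite set of formulas is clean if the conjunction of its members is clean -/
def CleanSet (Γ : Finset Formula) : Prop :=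
  (∀ φ ∈ Γ, φ.uniqueBinders) ∧
    Disjoint (Γ.sup Formula.fv) (Γ.sup Formula.bv) ∧
    (∀ φ ∈ Γ, ∀ ψ ∈ Γ, φ ≠ ψ → Disjoint φ.bv ψ.bv)

/-- `Γ` is Existential-safe: every component of every formula of `Γ` is a module
or universally quantified -/
def ExSafe (Γ : Finset Formula) : Prop :=
  ∀ φ ∈ Γ, ∀ β ∈ φ.comps, β.isModuleB = true ∨ ∃ (x : ℕ) (γ : Formula), β = .all x γ
/-! ## Tableau nodes and the LBF tableau rules -/

/-- a tableau node `(w : Γ, σ)`: a world name (a sequence of symbols), a finite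
set of formulas, and a partial identity assignment represented by its domain -/
structure Node where
  name : List ℕ
  Γ : Finset Formula
  σ : Finset ℕ

/-- the bodies of the `◇`-formulas of `Γ` (listed in some fixed order) -/
noncomputable def diaBodies (Γ : Finset Formula) : List Formula :=
  Γ.toList.filterMap fun φ => match φ with | .dia ψ => some ψ | _ => none

/-- the bodies of the `□`-formulas of `Γ` -/
noncomputable def boxBodies (Γ : Finset Formula) : Finset Formula :=
  (Γ.toList.filterMap fun φ => match φ with | .box ψ => some ψ | _ => none).toFinset

/-- `Step n cs` : the tableau rule relation; from the premise node `n` one rule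
application produces the conclusion nodes `cs` (for the branching rule `(∨)` a
non-deterministic choice of one branch is made). -/
inductive Step : Node → List Node → Prop where
  | and {w Γ σ} {φ ψ : Formula} (h : Formula.and φ ψ ∈ Γ) :
      Step ⟨w, Γ, σ⟩ [⟨w, insert φ (insert ψ (Γ.erase (.and φ ψ))), σ⟩]
  | orL {w Γ σ} {φ ψ : Formula} (h : Formula.or φ ψ ∈ Γ) :
      Step ⟨w, Γ, σ⟩ [⟨w, insert φ (Γ.erase (.or φ ψ)), σ⟩]
  | orR {w Γ σ} {φ ψ : Formula} (h : Formula.or φ ψ ∈ Γ) :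
      Step ⟨w, Γ, σ⟩ [⟨w, insert ψ (Γ.erase (.or φ ψ)), σ⟩]
  | exis {w Γ σ} {x : ℕ} {φ : Formula} (h : Formula.ex x φ ∈ Γ) :
      Step ⟨w, Γ, σ⟩ [⟨w, insert φ (Γ.erase (.ex x φ)), insert x σ⟩]
  | alls {w Γ σ} {y : ℕ} {φ : Formula} (f : ℕ → Formula)
      (h : Formula.all y φ ∈ Γ)
      (hsafe : ExSafe (Γ.erase (.all y φ)))
      (hα : ∀ z ∈ σ, AlphaEq (f z) (φ.subst y z))
      (hclean : CleanSet ((Γ.erase (.all y φ)) ∪ σ.image f))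
      (hσ : ∀ v ∈ σ, v ∉ ((Γ.erase (.all y φ)) ∪ σ.image f).sup Formula.bv) :
      Step ⟨w, Γ, σ⟩ [⟨w, (Γ.erase (.all y φ)) ∪ σ.image f, σ⟩]
  | diam {w Γ σ} (hmod : ∀ φ ∈ Γ, φ.isModuleB = true) (hne : diaBodies Γ ≠ []) :
      Step ⟨w, Γ, σ⟩
        (((List.range (diaBodies Γ).length).zip (diaBodies Γ)).map fun p => ⟨w ++ [p.1], insert p.2 (boxBodies Γ), σ⟩)
  | fin {w Γ σ} (hmod : ∀ φ ∈ Γ, φ.isModuleB = true) (hnd : diaBodies Γ = [])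
      (hbox : boxBodies Γ ≠ ∅) :
      Step ⟨w, Γ, σ⟩ [⟨w, Γ.filter (fun φ => φ.isLiteralB = true), σ⟩]

/-! ## Tableaux as finitely branching trees -/

inductive Tab : Type where
  | mk (n : Node) (k : ℕ) (children : Fin k → Tab)

def Tab.label : Tab → Node
  | .mk n _ _ => n

def Tab.isLeaf : Tab → Prop
  | .mk _ k _ => k = 0

/-- a well-formed tableau: the children of every internal node are obtained
from its label by one application of a tableau rule -/
def Tab.WF : Tab → Prop
  | .mk _ 0 _ => True
  | .mk n (k + 1) cs =>
      Step n ((List.ofFn cs).map Tab.label) ∧ ∀ i, (cs i).WF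

/-- `Subtree t s` : `s` is a subtree of `t` -/
inductive Subtree : Tab → Tab → Prop where
  | refl (t : Tab) : Subtree t t
  | child {n k} {cs : Fin k → Tab} {s : Tab} (i : Fin k) (h : Subtree (cs i) s) :
      Subtree (.mk n k cs) s

/-- a tableau is saturated if every leaf node contains only literals -/
def Saturated (t : Tab) : Prop :=
  ∀ s, Subtree t s → s.isLeaf → ∀ φ ∈ s.label.Γ, φ.isLiteralB = true

/-- a tableau is open if no node contains both a formula and its negation -/
def OpenT (t : Tab) : Prop :=
  ∀ s, Subtree t s → ∀ φ : Formula, ¬ (φ ∈ s.label.Γ ∧ Formula.neg φ ∈ s.label.Γ)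

/-- `Extends t' t` : the tableau `t'` extends the (partial) tableau `t` -/
inductive Extends : Tab → Tab → Prop where
  | leaf {t : Tab} {n : Node} {cs : Fin 0 → Tab} (h : t.label = n) :
      Extends t (.mk n 0 cs)
  | node {n : Node} {k : ℕ} {cs cs' : Fin k → Tab} (h : ∀ i, Extends (cs' i) (cs i)) :
      Extends (.mk n k cs') (.mk n k cs)

/-- the node is clean: its formula set is clean and the variables of its
assignment do not occur bound in its formulas -/
def NodeClean (n : Node) : Prop :=
  CleanSet n.Γ ∧ ∀ v ∈ n.σ, v ∉ n.Γ.sup Formula.bv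
/-! ## The loosely bundled fragment (LBF)

Formulas are assumed to be in negation normal form, so the bundled fragments
below only allow negation in front of atoms, together with both `∧`/`∨` and
`□`/`◇`. A quantifier prefix `∃x1…∃xk ∀y1…∀yl` is represented by two lists. -/

def exAllPrefix (xs ys : List ℕ) (ψ : Formula) : Formula :=
  xs.foldr Formula.ex (ys.foldr Formula.all ψ)

mutual
  /-- the `ψ`-formulas of LBF: boolean combinations of literals and modal formulas -/
  inductive LBFpsi : Formula → Prop where
    | atom (p : ℕ) (args : List ℕ) : LBFpsi (.atom p args)
    | natom (p : ℕ) (args : List ℕ) : LBFpsi (.neg (.atom p args))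
    | and {φ ψ : Formula} : LBFpsi φ → LBFpsi ψ → LBFpsi (.and φ ψ)
    | or {φ ψ : Formula} : LBFpsi φ → LBFpsi ψ → LBFpsi (.or φ ψ)
    | box {φ : Formula} : LBFalpha φ → LBFpsi (.box φ)
    | dia {φ : Formula} : LBFalpha φ → LBFpsi (.dia φ)

  /-- the `α`-formulas of LBF (the loosely bundled fragment itself) -/
  inductive LBFalpha : Formula → Prop where
    | psi {φ : Formula} : LBFpsi φ → LBFalpha φ
    | and {φ ψ : Formula} : LBFalpha φ → LBFalpha ψ → LBFalpha (.and φ ψ)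
    | or {φ ψ : Formula} : LBFalpha φ → LBFalpha ψ → LBFalpha (.or φ ψ)
    | exAll {xs ys : List ℕ} {ψ : Formula} : LBFpsi ψ → LBFalpha (exAllPrefix xs ys ψ)
end

/-!
Two properties of the root are inherited by every node of a tableau: the node is clean, and its
formulas are in LBF. For the `(∀)` rule the second holds because membership in LBF depends only
on the shape of a formula, which α-equivalence preserves.

At a node with these properties some rule applies unless only literals are left. `(∧)`, `(∨)`
and `(∃)` apply to their formulas. Once none of them is left, every formula is a module or an LBF
universal, so the side formulas of a universal are Existential-safe and `(∀)` applies. Its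
instances have their bound variables renamed to fresh, pairwise distinct ones, which keeps the
node clean. When only modules are left, `(◇)` or `(END)` applies.

The steps chosen this way decrease the lexicographic measure (modal depth, number of `∃` outside
modalities, weight). A universal weighs `|σ|` times its body plus one. Well-founded recursion on
this measure then extends every leaf to a saturated subtableau.
-/

section Finset

variable {α : Type*} [DecidableEq α]

lemma insert_insert_erase_eq (s : Finset α) (a b c : α) :
    insert a (insert b (s.erase c)) = s.erase c ∪ {a, b} := by
  rw [Finset.union_insert, Finset.union_singleton]

lemma sum_pair_le (f : α → ℕ) (a b : α) : ∑ x ∈ {a, b}, f x ≤ f a + f b := by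
  rcases eq_or_ne a b with rfl | hab
  · simp
  · rw [Finset.sum_pair hab]

lemma sum_erase_union_add_le {s t : Finset α} {a : α}
    (f : α → ℕ) (ha : a ∈ s) : ∑ x ∈ s.erase a ∪ t, f x + f a ≤ ∑ x ∈ s, f x + ∑ x ∈ t, f x := by
  have := Finset.sum_union_inter (s₁ := s.erase a) (s₂ := t) (f := f)
  have := Finset.sum_erase_add s f ha
  omega

end Finset

namespace Formula

inductive Skel : Type where
  | atom | neg (s : Skel) | and (s t : Skel) | or (s t : Skel)
  | box (s : Skel) | dia (s : Skel) | ex (s : Skel) | all (s : Skel)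
deriving DecidableEq

def shape : Formula → Skel
  | .atom _ _ => .atom
  | .neg φ => .neg φ.shape
  | .and φ ψ => .and φ.shape ψ.shape
  | .or φ ψ => .or φ.shape ψ.shape
  | .box φ => .box φ.shape
  | .dia φ => .dia φ.shape
  | .ex _ φ => .ex φ.shape
  | .all _ φ => .all φ.shape

def mapVar (g : ℕ → ℕ) : Formula → Formula
  | .atom p args => .atom p (args.map g)
  | .neg φ => .neg (φ.mapVar g)
  | .and φ ψ => .and (φ.mapVar g) (ψ.mapVar g)
  | .or φ ψ => .or (φ.mapVar g) (ψ.mapVar g)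
  | .box φ => .box (φ.mapVar g)
  | .dia φ => .dia (φ.mapVar g)
  | .ex x φ => .ex (g x) (φ.mapVar g)
  | .all x φ => .all (g x) (φ.mapVar g)

@[simp] lemma shape_mapVar (g : ℕ → ℕ) (φ : Formula) : (φ.mapVar g).shape = φ.shape := by
  induction φ <;> simp [mapVar, shape, *]

@[simp] lemma shape_subst (y z : ℕ) (φ : Formula) : (φ.subst y z).shape = φ.shape := by
  induction φ <;> simp [subst, shape, *] <;> split <;> simp [shape, *]

@[simp] lemma bv_subst (y z : ℕ) (φ : Formula) : (φ.subst y z).bv = φ.bv := by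
  induction φ <;> simp [subst, bv, *] <;> split <;> simp [bv, *]

@[simp] lemma bv_mapVar (g : ℕ → ℕ) (φ : Formula) : (φ.mapVar g).bv = φ.bv.image g := by
  induction φ <;> simp [mapVar, bv, Finset.image_union, Finset.image_insert, *]

lemma fv_subst_subset (y z : ℕ) (φ : Formula) : (φ.subst y z).fv ⊆ insert z (φ.fv.erase y) := by
  induction φ with
  | atom p args =>
    intro v
    simp only [subst, fv, List.mem_toFinset, List.mem_map, Finset.mem_insert, Finset.mem_erase]
    grind
  | ex x φ ih | all x φ ih =>
    simp only [subst]
    split_ifs with h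
    · subst h; intro v; simp only [fv, Finset.mem_insert, Finset.mem_erase]; tauto
    · intro v hv
      simp only [fv, Finset.mem_insert, Finset.mem_erase] at hv ⊢
      have := ih hv.2
      simp only [Finset.mem_insert, Finset.mem_erase] at this
      tauto
  | neg φ ih | box φ ih | dia φ ih => exact ih
  | and φ ψ ih₁ ih₂ | or φ ψ ih₁ ih₂ =>
    exact Finset.union_subset (ih₁.trans (by gcongr; exact Finset.subset_union_left))
      (ih₂.trans (by gcongr; exact Finset.subset_union_right))


lemma fv_mapVar_subset (g : ℕ → ℕ) (φ : Formula) : (φ.mapVar g).fv ⊆ φ.fv.image g := by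
  induction φ with
  | atom p args => intro v; simp [mapVar, fv]
  | neg φ ih | box φ ih | dia φ ih => exact ih
  | and φ ψ ih₁ ih₂ | or φ ψ ih₁ ih₂ =>
    simp only [mapVar, fv, Finset.image_union]; exact Finset.union_subset_union ih₁ ih₂
  | ex x φ ih | all x φ ih =>
    intro v hv
    simp only [mapVar, fv, Finset.mem_erase] at hv
    obtain ⟨u, hu, rfl⟩ := Finset.mem_image.mp (ih hv.2)
    exact Finset.mem_image_of_mem g (Finset.mem_erase.mpr ⟨fun h => hv.1 (h ▸ rfl), hu⟩)

lemma uniqueBinders_subst {φ : Formula} (h : φ.uniqueBinders) (y z : ℕ) :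
    (φ.subst y z).uniqueBinders := by
  induction φ with
  | atom => trivial
  | neg φ ih | box φ ih | dia φ ih => exact ih h
  | and φ ψ ih₁ ih₂ | or φ ψ ih₁ ih₂ =>
    obtain ⟨h₁, h₂, h₃⟩ := h
    exact ⟨ih₁ h₁, ih₂ h₂, by simpa using h₃⟩
  | ex x φ ih | all x φ ih =>
    simp only [subst]
    split_ifs
    · exact h
    · exact ⟨ih h.1, by simpa using h.2⟩

lemma uniqueBinders_mapVar {g : ℕ → ℕ} {φ : Formula} (hg : Set.InjOn g φ.bv)
    (h : φ.uniqueBinders) : (φ.mapVar g).uniqueBinders := by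
  induction φ with
  | atom => trivial
  | neg φ ih | box φ ih | dia φ ih => exact ih hg h
  | and φ ψ ih₁ ih₂ | or φ ψ ih₁ ih₂ =>
    obtain ⟨h₁, h₂, h₃⟩ := h
    simp only [bv, Finset.coe_union] at hg
    refine ⟨ih₁ (hg.mono Set.subset_union_left) h₁, ih₂ (hg.mono Set.subset_union_right) h₂, ?_⟩
    simp only [bv_mapVar]
    refine Finset.disjoint_left.mpr ?_
    simp only [Finset.mem_image]
    rintro _ ⟨u, hu, rfl⟩ ⟨u', hu', hgu⟩
    exact Finset.disjoint_left.mp h₃ hu (hg (by simp [hu']) (by simp [hu]) hgu ▸ hu')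
  | ex x φ ih | all x φ ih =>
    simp only [bv, Finset.coe_insert] at hg
    refine ⟨ih (hg.mono (Set.subset_insert _ _)) h.1, ?_⟩
    simp only [bv_mapVar, Finset.mem_image, not_exists, not_and]
    intro v hv hvx
    exact h.2 (hg (Set.mem_insert_of_mem _ hv) (Set.mem_insert _ _) hvx ▸ hv)


@[simp] lemma mapVar_id (φ : Formula) : φ.mapVar id = φ := by
  induction φ <;> simp [mapVar, *]

lemma mapVar_mapVar (g h : ℕ → ℕ) (φ : Formula) : (φ.mapVar h).mapVar g = φ.mapVar (g ∘ h) := by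
  induction φ <;> simp [mapVar, *]

lemma mapVar_congr {g g' : ℕ → ℕ} {φ : Formula} (h : ∀ v ∈ φ.fv ∪ φ.bv, g v = g' v) :
    φ.mapVar g = φ.mapVar g' := by
  induction φ with
  | atom p args => simpa [mapVar, fv, bv, List.map_inj_left] using h
  | neg φ ih | box φ ih | dia φ ih => simp only [mapVar]; rw [ih h]
  | and φ ψ ih₁ ih₂ | or φ ψ ih₁ ih₂ =>
    simp only [mapVar]
    rw [ih₁ fun v hv => h v (by simp only [fv, bv, Finset.mem_union] at hv ⊢; tauto),
      ih₂ fun v hv => h v (by simp only [fv, bv, Finset.mem_union] at hv ⊢; tauto)]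
  | ex x φ ih | all x φ ih =>
    simp only [mapVar]
    rw [ih fun v hv => h v (by simp only [fv, bv, Finset.mem_union, Finset.mem_erase,
      Finset.mem_insert] at hv ⊢; tauto), h x (by simp [bv])]

lemma subst_eq_mapVar {y : ℕ} (z : ℕ) {φ : Formula} (hy : y ∉ φ.bv) :
    φ.subst y z = φ.mapVar (fun v => if v = y then z else v) := by
  induction φ with
  | atom p args => simp [subst, mapVar]
  | neg φ ih | box φ ih | dia φ ih => simp only [subst, mapVar]; rw [ih hy]
  | and φ ψ ih₁ ih₂ | or φ ψ ih₁ ih₂ =>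
    simp only [bv, Finset.mem_union, not_or] at hy
    simp only [subst, mapVar]; rw [ih₁ hy.1, ih₂ hy.2]
  | ex x φ ih | all x φ ih =>
    simp only [bv, Finset.mem_insert, not_or] at hy
    simp only [subst, mapVar, if_neg (Ne.symm hy.1)]; rw [ih hy.2]

def SeparatesBound (g : ℕ → ℕ) (φ : Formula) : Prop :=
  ∀ v ∈ φ.fv ∪ φ.bv, ∀ w ∈ φ.bv, g v = g w → v = w

lemma SeparatesBound.mono {g : ℕ → ℕ} {φ ψ : Formula} (hg : SeparatesBound g ψ)
    (hvars : φ.fv ∪ φ.bv ⊆ ψ.fv ∪ ψ.bv) (hbv : φ.bv ⊆ ψ.bv) : SeparatesBound g φ :=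
  fun v hv w hw => hg v (hvars hv) w (hbv hw)

section Binder

/-! `ex x φ` and `all x φ` have the same free and bound variables, so the lemmas below,
stated for `all x φ`, serve both binders. -/

variable {x : ℕ} {φ : Formula} {g : ℕ → ℕ}

lemma SeparatesBound.of_binder (hg : SeparatesBound g (.all x φ)) : SeparatesBound g φ :=
  hg.mono (fun v => by
    simp only [fv, bv, Finset.mem_union, Finset.mem_erase, Finset.mem_insert]; tauto)
    (Finset.subset_insert _ _)

lemma subst_mapVar_eq_mapVar_update (hx : x ∉ φ.bv) (hg : SeparatesBound g (.all x φ)) (z : ℕ) :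
    (φ.mapVar g).subst (g x) z = φ.mapVar (Function.update g x z) := by
  have hsep : ∀ v ∈ φ.fv ∪ φ.bv, g v = g x → v = x := fun v hv =>
    hg v (by simp only [fv, bv, Finset.mem_union, Finset.mem_erase, Finset.mem_insert] at hv ⊢
             tauto) x (Finset.mem_insert_self x _)
  have hgx : g x ∉ (φ.mapVar g).bv := by
    simp only [bv_mapVar, Finset.mem_image, not_exists, not_and]
    exact fun w hw hwx => hx (hsep w (Finset.mem_union_right _ hw) hwx ▸ hw)
  rw [subst_eq_mapVar z hgx, mapVar_mapVar]
  refine mapVar_congr fun v hv => ?_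
  by_cases hvx : v = x
  · simp [hvx]
  · simp [hvx, mt (hsep v hv) hvx]

lemma SeparatesBound.update (hx : x ∉ φ.bv) (hg : SeparatesBound g (.all x φ)) {z : ℕ}
    (hz : z ∉ φ.bv.image g) : SeparatesBound (Function.update g x z) φ := by
  intro v hv w hw hvw
  have hwx : w ≠ x := fun h => hx (h ▸ hw)
  rw [Function.update_of_ne hwx] at hvw
  by_cases hvx : v = x
  · rw [hvx, Function.update_self] at hvw
    exact absurd (Finset.mem_image_of_mem g hw) (hvw ▸ hz)
  · rw [Function.update_of_ne hvx] at hvw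
    exact hg.of_binder v hv w hw hvw

end Binder

lemma alphaEq_mapVar {φ : Formula} (hφ : φ.uniqueBinders) {g h : ℕ → ℕ}
    (hg : SeparatesBound g φ) (hh : SeparatesBound h φ) (hgh : ∀ v ∈ φ.fv, g v = h v) :
    AlphaEq (φ.mapVar g) (φ.mapVar h) := by
  induction φ generalizing g h with
  | atom p args =>
    rw [mapVar, mapVar, List.map_congr_left fun v hv => hgh v (by simpa [fv] using hv)]
    exact .atom _ _
  | neg φ ih => exact .neg (ih hφ hg hh hgh)
  | box φ ih => exact .box (ih hφ hg hh hgh)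
  | dia φ ih => exact .dia (ih hφ hg hh hgh)
  | and φ ψ ih₁ ih₂ | or φ ψ ih₁ ih₂ =>
    have hl : φ.fv ∪ φ.bv ⊆ (φ.fv ∪ ψ.fv) ∪ (φ.bv ∪ ψ.bv) := fun v => by
      simp only [Finset.mem_union]; tauto
    have hr : ψ.fv ∪ ψ.bv ⊆ (φ.fv ∪ ψ.fv) ∪ (φ.bv ∪ ψ.bv) := fun v => by
      simp only [Finset.mem_union]; tauto
    first
    | refine .and ?_ ?_
    | refine .or ?_ ?_
    · exact ih₁ hφ.1 (hg.mono hl Finset.subset_union_left) (hh.mono hl Finset.subset_union_left)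
        fun v hv => hgh v (Finset.mem_union_left _ hv)
    · exact ih₂ hφ.2.1 (hg.mono hr Finset.subset_union_right)
        (hh.mono hr Finset.subset_union_right) fun v hv => hgh v (Finset.mem_union_right _ hv)
  | ex x φ ih | all x φ ih =>
    first
    | refine .ex fun z hz => ?_
    | refine .all fun z hz => ?_
    simp only [bv_mapVar, Finset.mem_union, not_or] at hz
    rw [subst_mapVar_eq_mapVar_update hφ.2 hg, subst_mapVar_eq_mapVar_update hφ.2 hh]
    refine ih hφ.1 (hg.update hφ.2 hz.1) (hh.update hφ.2 hz.2) fun v hv => ?_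
    by_cases hvx : v = x
    · simp [hvx]
    · simpa [hvx] using hgh v (Finset.mem_erase.mpr ⟨hvx, hv⟩)

lemma _root_.AlphaEq.shape_eq {φ ψ : Formula} (h : AlphaEq φ ψ) : φ.shape = ψ.shape := by
  induction h with
  | atom => rfl
  | neg _ ih | box _ ih | dia _ ih => simp [shape, ih]
  | and _ _ ih₁ ih₂ | or _ _ ih₁ ih₂ => simp [shape, ih₁, ih₂]
  | @ex _ _ φ φ' _ ih | @all _ _ φ φ' _ ih =>
    obtain ⟨z, hz⟩ := Infinite.exists_notMem_finset (φ.bv ∪ φ'.bv)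
    simpa [shape] using ih z hz


/-- Renaming the bound variables to `N + 1 + pair z v` puts them above every variable of the
node (all bounded by `N`) and keeps the instances for different `z` apart. -/
def freshInstance (N : ℕ) (φ : Formula) (y z : ℕ) : Formula :=
  (φ.subst y z).mapVar fun v => if v ∈ φ.bv then N + 1 + Nat.pair z v else v

variable {N y z : ℕ} {φ : Formula}

@[simp] lemma shape_freshInstance : (freshInstance N φ y z).shape = φ.shape := by
  simp [freshInstance]

lemma bv_freshInstance :
    (freshInstance N φ y z).bv = φ.bv.image fun v => N + 1 + Nat.pair z v := by
  simp only [freshInstance, bv_mapVar, bv_subst]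
  exact Finset.image_congr fun v hv => if_pos hv

lemma lt_of_mem_bv_freshInstance {v : ℕ} (hv : v ∈ (freshInstance N φ y z).bv) : N < v := by
  rw [bv_freshInstance] at hv
  obtain ⟨u, -, rfl⟩ := Finset.mem_image.mp hv
  omega

lemma disjoint_bv_freshInstance {z' : ℕ} (hz : z ≠ z') :
    Disjoint (freshInstance N φ y z).bv (freshInstance N φ y z').bv := by
  simp only [bv_freshInstance, Finset.disjoint_left, Finset.mem_image, not_exists, not_and]
  rintro _ ⟨u, -, rfl⟩ u' - h
  rw [add_right_inj, Nat.pair_eq_pair] at h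
  exact hz h.1.symm

section

variable (hfree : Disjoint (insert z (φ.fv.erase y)) φ.bv)
  (hN : ∀ v ∈ insert z (φ.fv.erase y), v ≤ N)
include hfree

lemma fv_freshInstance_subset : (freshInstance N φ y z).fv ⊆ insert z (φ.fv.erase y) := by
  refine (fv_mapVar_subset _ _).trans fun v hv => ?_
  obtain ⟨u, hu, rfl⟩ := Finset.mem_image.mp hv
  have hu' := fv_subst_subset y z φ hu
  rwa [if_neg (Finset.disjoint_left.mp hfree hu')]

include hN

lemma alphaEq_freshInstance (hφ : φ.uniqueBinders) :
    AlphaEq (freshInstance N φ y z) (φ.subst y z) := by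
  have hfv : ∀ v ∈ (φ.subst y z).fv, v ∉ φ.bv ∧ v ≤ N := fun v hv =>
    ⟨Finset.disjoint_left.mp hfree (fv_subst_subset y z φ hv), hN v (fv_subst_subset y z φ hv)⟩
  have hsep : SeparatesBound (fun v => if v ∈ φ.bv then N + 1 + Nat.pair z v else v)
      (φ.subst y z) := by
    intro v hv w hw hvw
    rw [bv_subst] at hv hw
    simp only [if_pos hw] at hvw
    by_cases hvb : v ∈ φ.bv
    · rw [if_pos hvb, add_right_inj, Nat.pair_eq_pair] at hvw
      exact hvw.2
    · rw [if_neg hvb] at hvw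
      have := (hfv v (by simpa [hvb] using hv)).2
      omega
  simpa [freshInstance] using alphaEq_mapVar (uniqueBinders_subst hφ y z) hsep (h := id)
    (fun v _ w _ h => h) (fun v hv => if_neg (hfv v hv).1)

end

lemma uniqueBinders_freshInstance (hφ : φ.uniqueBinders) :
    (freshInstance N φ y z).uniqueBinders := by
  refine uniqueBinders_mapVar (fun v hv w hw hvw => ?_) (uniqueBinders_subst hφ y z)
  simp only [bv_subst, Finset.mem_coe] at hv hw
  simp only [if_pos hv, if_pos hw, add_right_inj, Nat.pair_eq_pair] at hvw
  exact hvw.2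


lemma eq_foldr_all_of_shape_eq {ψ : Formula} {ys : List ℕ} {φ : Formula}
    (h : φ.shape = (ys.foldr all ψ).shape) :
    ∃ (ys' : List ℕ) (ψ' : Formula), φ = ys'.foldr all ψ' ∧ ψ'.shape = ψ.shape := by
  induction ys generalizing φ with
  | nil => exact ⟨[], φ, rfl, h⟩
  | cons y ys ih =>
    cases φ <;> simp only [List.foldr, shape, reduceCtorEq, Skel.all.injEq] at h
    obtain ⟨ys', ψ', rfl, hs⟩ := ih h
    exact ⟨_ :: ys', ψ', rfl, hs⟩

lemma eq_exAllPrefix_of_shape_eq {ψ : Formula} {xs ys : List ℕ} {φ : Formula}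
    (h : φ.shape = (exAllPrefix xs ys ψ).shape) :
    ∃ (xs' ys' : List ℕ) (ψ' : Formula), φ = exAllPrefix xs' ys' ψ' ∧ ψ'.shape = ψ.shape := by
  induction xs generalizing φ with
  | nil =>
    obtain ⟨ys', ψ', rfl, hs⟩ := eq_foldr_all_of_shape_eq h
    exact ⟨[], ys', ψ', rfl, hs⟩
  | cons x xs ih =>
    cases φ <;> simp only [exAllPrefix, List.foldr, shape, reduceCtorEq, Skel.ex.injEq] at h
    obtain ⟨xs', ys', ψ', rfl, hs⟩ := ih h
    exact ⟨_ :: xs', ys', ψ', rfl, hs⟩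

end Formula

open Formula

lemma LBFalpha.of_shape_eq {φ φ' : Formula} (h : LBFalpha φ) (hs : φ'.shape = φ.shape) :
    LBFalpha φ' := by
  refine LBFalpha.rec (motive_1 := fun φ _ => ∀ φ', φ'.shape = φ.shape → LBFpsi φ')
    (motive_2 := fun φ _ => ∀ φ', φ'.shape = φ.shape → LBFalpha φ')
    ?atom ?natom ?and ?or ?box ?dia ?psi ?and' ?or' ?exAll h φ' hs
  case atom =>
    intro _ _ φ' h
    cases φ' <;> simp only [shape, reduceCtorEq] at h
    exact .atom _ _
  case natom =>
    intro _ _ φ' h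
    cases φ' <;> simp only [shape, reduceCtorEq, Skel.neg.injEq] at h
    rename_i χ
    cases χ <;> simp only [shape, reduceCtorEq] at h
    exact .natom _ _
  case and | and' =>
    intro _ _ _ _ ih₁ ih₂ φ' h
    cases φ' <;> simp only [shape, reduceCtorEq, Skel.and.injEq] at h
    exact .and (ih₁ _ h.1) (ih₂ _ h.2)
  case or | or' =>
    intro _ _ _ _ ih₁ ih₂ φ' h
    cases φ' <;> simp only [shape, reduceCtorEq, Skel.or.injEq] at h
    exact .or (ih₁ _ h.1) (ih₂ _ h.2)
  case box =>
    intro _ _ ih φ' h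
    cases φ' <;> simp only [shape, reduceCtorEq, Skel.box.injEq] at h
    exact .box (ih _ h)
  case dia =>
    intro _ _ ih φ' h
    cases φ' <;> simp only [shape, reduceCtorEq, Skel.dia.injEq] at h
    exact .dia (ih _ h)
  case psi => exact fun _ ih φ' h => .psi (ih φ' h)
  case exAll =>
    intro _ _ _ _ ih φ' h
    obtain ⟨xs', ys', ψ', rfl, hs⟩ := eq_exAllPrefix_of_shape_eq h
    exact .exAll (ih ψ' hs)

lemma LBFalpha.cases_eq {φ : Formula} (h : LBFalpha φ) :
    LBFpsi φ ∨ (∃ a b, φ = .and a b ∧ LBFalpha a ∧ LBFalpha b) ∨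
      (∃ a b, φ = .or a b ∧ LBFalpha a ∧ LBFalpha b) ∨ (∃ x χ, φ = .ex x χ ∧ LBFalpha χ) ∨
      ∃ (y : ℕ) (ys : List ℕ) (ψ : Formula), φ = .all y (ys.foldr all ψ) ∧ LBFpsi ψ := by
  rcases h with h | ⟨h₁, h₂⟩ | ⟨h₁, h₂⟩ | @⟨xs, ys, ψ, h⟩
  · exact .inl h
  · exact .inr <| .inl ⟨_, _, rfl, h₁, h₂⟩
  · exact .inr <| .inr <| .inl ⟨_, _, rfl, h₁, h₂⟩
  · rcases xs with _ | ⟨x, xs⟩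
    · rcases ys with _ | ⟨y, ys⟩
      · exact .inl h
      · exact .inr <| .inr <| .inr <| .inr ⟨y, ys, ψ, rfl, h⟩
    · exact .inr <| .inr <| .inr <| .inl ⟨x, _, rfl, .exAll h⟩

lemma LBFalpha.foldr_all {ψ : Formula} (h : LBFpsi ψ) (ys : List ℕ) :
    LBFalpha (ys.foldr all ψ) :=
  .exAll (xs := []) h

namespace LBFalpha

variable {a b χ : Formula}

lemma and_inv (h : LBFalpha (.and a b)) : LBFalpha a ∧ LBFalpha b := by
  rcases h.cases_eq with h | ⟨_, _, he, h₁, h₂⟩ | ⟨_, _, he, -⟩ | ⟨_, _, he, -⟩ | ⟨_, _, _, he, -⟩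
  · cases h with | and h₁ h₂ => exact ⟨.psi h₁, .psi h₂⟩
  · cases he; exact ⟨h₁, h₂⟩
  all_goals cases he

lemma or_inv (h : LBFalpha (.or a b)) : LBFalpha a ∧ LBFalpha b := by
  rcases h.cases_eq with h | ⟨_, _, he, -⟩ | ⟨_, _, he, h₁, h₂⟩ | ⟨_, _, he, -⟩ | ⟨_, _, _, he, -⟩
  · cases h with | or h₁ h₂ => exact ⟨.psi h₁, .psi h₂⟩
  · cases he
  · cases he; exact ⟨h₁, h₂⟩
  all_goals cases he

lemma ex_inv {x : ℕ} (h : LBFalpha (.ex x χ)) : LBFalpha χ := by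
  rcases h.cases_eq with h | ⟨_, _, he, -⟩ | ⟨_, _, he, -⟩ | ⟨_, _, he, h'⟩ | ⟨_, _, _, he, -⟩
  · cases h
  · cases he
  · cases he
  · cases he; exact h'
  · cases he

lemma all_inv {y : ℕ} (h : LBFalpha (.all y χ)) :
    ∃ (ys : List ℕ) (ψ : Formula), χ = ys.foldr all ψ ∧ LBFpsi ψ := by
  rcases h.cases_eq with h | ⟨_, _, he, -⟩ | ⟨_, _, he, -⟩ | ⟨_, _, he, -⟩ | ⟨_, ys, ψ, he, h'⟩
  · cases h
  · cases he
  · cases he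
  · cases he
  · cases he; exact ⟨ys, ψ, rfl, h'⟩

lemma box_inv (h : LBFalpha (.box χ)) : LBFalpha χ := by
  rcases h.cases_eq with h | ⟨_, _, he, -⟩ | ⟨_, _, he, -⟩ | ⟨_, _, he, -⟩ | ⟨_, _, _, he, -⟩
  · cases h with | box h => exact h
  all_goals cases he

lemma dia_inv (h : LBFalpha (.dia χ)) : LBFalpha χ := by
  rcases h.cases_eq with h | ⟨_, _, he, -⟩ | ⟨_, _, he, -⟩ | ⟨_, _, he, -⟩ | ⟨_, _, _, he, -⟩
  · cases h with | dia h => exact h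
  all_goals cases he

lemma isModuleB_neg (h : LBFalpha (.neg χ)) : (Formula.neg χ).isModuleB = true := by
  rcases h.cases_eq with h | ⟨_, _, he, -⟩ | ⟨_, _, he, -⟩ | ⟨_, _, he, -⟩ | ⟨_, _, _, he, -⟩
  · cases h with | natom => rfl
  all_goals cases he

end LBFalpha

lemma LBFpsi.isModuleB_of_mem_comps {ψ : Formula} (h : LBFpsi ψ) :
    ∀ β ∈ ψ.comps, β.isModuleB = true := by
  refine LBFpsi.rec (motive_1 := fun ψ _ => ∀ β ∈ ψ.comps, β.isModuleB = true)
    (motive_2 := fun _ _ => True) ?atom ?natom ?and ?or ?box ?dia (fun _ _ => trivial)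
    (fun _ _ _ _ => trivial) (fun _ _ _ _ => trivial) (fun _ _ => trivial) h
  case and | or =>
    intro _ _ _ _ ih₁ ih₂ β hβ
    rcases Finset.mem_union.mp hβ with hβ | hβ
    exacts [ih₁ β hβ, ih₂ β hβ]
  all_goals
    intros
    rename_i hβ
    rw [Finset.mem_singleton.mp hβ]
    rfl

lemma LBFpsi.exists_comps_foldr_all {ψ : Formula} (h : LBFpsi ψ) (ys : List ℕ) :
    ∀ β ∈ (ys.foldr all ψ).comps, β.isModuleB = true ∨ ∃ x γ, β = .all x γ := by
  induction ys with
  | nil => exact fun β hβ => .inl (h.isModuleB_of_mem_comps β hβ)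
  | cons y ys ih =>
    intro β hβ
    rcases Finset.mem_insert.mp hβ with rfl | hβ
    exacts [.inr ⟨_, _, rfl⟩, ih β hβ]

section Decomposition

variable {Γ : Finset Formula} (hlbf : ∀ φ ∈ Γ, LBFalpha φ) (hand : ∀ a b, .and a b ∉ Γ)
  (hor : ∀ a b, .or a b ∉ Γ) (hex : ∀ x φ, .ex x φ ∉ Γ)
include hlbf hand hor hex

lemma exSafe_of_lbf : ExSafe Γ := by
  intro φ hφ β hβ
  cases φ with
  | and a b => exact absurd hφ (hand a b)
  | or a b => exact absurd hφ (hor a b)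
  | ex x χ => exact absurd hφ (hex x χ)
  | all y χ =>
    obtain ⟨ys, ψ, rfl, hψ⟩ := (hlbf _ hφ).all_inv
    exact hψ.exists_comps_foldr_all (y :: ys) β hβ
  | neg χ => rw [Finset.mem_singleton.mp hβ]; exact .inl (hlbf _ hφ).isModuleB_neg
  | atom | box | dia => rw [Finset.mem_singleton.mp hβ]; exact .inl rfl

lemma isModuleB_of_lbf (hall : ∀ y φ, .all y φ ∉ Γ) : ∀ φ ∈ Γ, φ.isModuleB = true := by
  intro φ hφ
  cases φ with
  | and a b => exact absurd hφ (hand a b)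
  | or a b => exact absurd hφ (hor a b)
  | ex x χ => exact absurd hφ (hex x χ)
  | all y χ => exact absurd hφ (hall y χ)
  | neg χ => exact (hlbf _ hφ).isModuleB_neg
  | atom | box | dia => rfl

end Decomposition

lemma Formula.isLiteralB_of_isModuleB {φ : Formula} (h : φ.isModuleB = true)
    (hbox : ∀ χ, φ ≠ .box χ) (hdia : ∀ χ, φ ≠ .dia χ) : φ.isLiteralB = true := by
  cases φ with
  | box χ => exact absurd rfl (hbox χ)
  | dia χ => exact absurd rfl (hdia χ)
  | _ => simpa [isModuleB] using h

lemma cleanSet_iff {Γ : Finset Formula} :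
    CleanSet Γ ↔ (∀ φ ∈ Γ, φ.uniqueBinders) ∧ (∀ φ ∈ Γ, ∀ ψ ∈ Γ, Disjoint φ.fv ψ.bv) ∧
      ∀ φ ∈ Γ, ∀ ψ ∈ Γ, φ ≠ ψ → Disjoint φ.bv ψ.bv := by
  rw [CleanSet, Finset.disjoint_sup_left]
  simp only [Finset.disjoint_sup_right]

lemma nodeClean_iff {n : Node} :
    NodeClean n ↔ CleanSet n.Γ ∧ ∀ φ ∈ n.Γ, Disjoint n.σ φ.bv := by
  simp only [NodeClean, Finset.mem_sup, not_exists, not_and, Finset.disjoint_left]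
  grind

lemma NodeClean.of_parent {n n' : Node} (hn : NodeClean n) (p : Formula → Formula)
    (E : Finset ℕ) (hp : ∀ δ ∈ n'.Γ, p δ ∈ n.Γ ∧ δ.uniqueBinders ∧ δ.bv ⊆ (p δ).bv ∧
      δ.fv ⊆ (p δ).fv ∪ E)
    (hsplit : ∀ δ ∈ n'.Γ, ∀ δ' ∈ n'.Γ, δ ≠ δ' → p δ = p δ' → Disjoint δ.bv δ'.bv)
    (hE : ∀ δ ∈ n'.Γ, Disjoint E δ.bv) (hσ : n'.σ ⊆ n.σ ∪ E) : NodeClean n' := by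
  rw [nodeClean_iff, cleanSet_iff] at hn ⊢
  obtain ⟨⟨-, hfvbv, hpair⟩, hσbv⟩ := hn
  refine ⟨⟨fun δ hδ => (hp δ hδ).2.1, fun δ hδ δ' hδ' => ?_, fun δ hδ δ' hδ' hne => ?_⟩,
    fun δ hδ => ?_⟩
  · refine Finset.disjoint_left.mpr fun v hv hv' => ?_
    rcases Finset.mem_union.mp ((hp δ hδ).2.2.2 hv) with hv | hv
    · exact Finset.disjoint_left.mp (hfvbv _ (hp δ hδ).1 _ (hp δ' hδ').1) hv
        ((hp δ' hδ').2.2.1 hv')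
    · exact Finset.disjoint_left.mp (hE δ' hδ') hv hv'
  · by_cases hpp : p δ = p δ'
    · exact hsplit δ hδ δ' hδ' hne hpp
    · exact (hpair _ (hp δ hδ).1 _ (hp δ' hδ').1 hpp).mono (hp δ hδ).2.2.1 (hp δ' hδ').2.2.1
  · refine Finset.disjoint_left.mpr fun v hv hv' => ?_
    rcases Finset.mem_union.mp (hσ hv) with hv | hv
    · exact Finset.disjoint_left.mp (hσbv _ (hp δ hδ).1) hv ((hp δ hδ).2.2.1 hv')
    · exact Finset.disjoint_left.mp (hE δ hδ) hv hv'

lemma NodeClean.replace {w w' : List ℕ} {Γ Δ : Finset Formula} {σ σ' E : Finset ℕ}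
    {χ : Formula} (hn : NodeClean ⟨w, Γ, σ⟩) (hχ : χ ∈ Γ)
    (hΔ : ∀ δ ∈ Δ, δ.uniqueBinders ∧ δ.bv ⊆ χ.bv ∧ δ.fv ⊆ χ.fv ∪ E)
    (hpair : ∀ δ ∈ Δ, ∀ δ' ∈ Δ, δ ≠ δ' → Disjoint δ.bv δ'.bv)
    (hE : E ⊆ χ.bv) (hEΔ : ∀ δ ∈ Δ, Disjoint E δ.bv) (hσ : σ' ⊆ σ ∪ E) :
    NodeClean ⟨w', Γ.erase χ ∪ Δ, σ'⟩ := by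
  have hΓ := cleanSet_iff.mp hn.1
  refine hn.of_parent (fun δ => if δ ∈ Γ.erase χ then δ else χ) E (fun δ hδ => ?_)
    (fun δ hδ δ' hδ' hne hpp => ?_) (fun δ hδ => ?_) hσ
  · split_ifs with hδΓ
    · exact ⟨Finset.mem_of_mem_erase hδΓ, hΓ.1 δ (Finset.mem_of_mem_erase hδΓ), subset_rfl,
        Finset.subset_union_left⟩
    · exact ⟨hχ, hΔ δ ((Finset.mem_union.mp hδ).resolve_left hδΓ)⟩
  · split_ifs at hpp with h₁ h₂ h₂
    · exact absurd hpp hne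
    · exact absurd hpp (Finset.ne_of_mem_erase h₁)
    · exact absurd hpp.symm (Finset.ne_of_mem_erase h₂)
    · exact hpair δ ((Finset.mem_union.mp hδ).resolve_left h₁) δ'
        ((Finset.mem_union.mp hδ').resolve_left h₂) hne
  · rcases Finset.mem_union.mp hδ with hδ | hδ
    · exact (hΓ.2.2 χ hχ δ (Finset.mem_of_mem_erase hδ)
        (Finset.ne_of_mem_erase hδ).symm).mono_left hE
    · exact hEΔ δ hδ

lemma disjoint_bv_of_mem_instances {w : List ℕ} {Γ : Finset Formula} {σ : Finset ℕ} {y N : ℕ}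
    {φ β : Formula} (hn : NodeClean ⟨w, Γ, σ⟩)
    (hN : ∀ v ∈ Γ.sup fv ∪ Γ.sup bv ∪ σ, v ≤ N)
    (hβ : β ∈ Γ.erase (.all y φ) ∪ σ.image (freshInstance N φ y)) :
    Disjoint (Γ.sup fv ∪ σ) β.bv := by
  obtain ⟨hΓ, hσΓ⟩ := nodeClean_iff.mp hn
  rcases Finset.mem_union.mp hβ with hβ | hβ
  · exact Finset.disjoint_union_left.mpr ⟨Finset.disjoint_sup_left.mpr fun γ hγ =>
      (cleanSet_iff.mp hΓ).2.1 γ hγ β (Finset.mem_of_mem_erase hβ),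
      hσΓ β (Finset.mem_of_mem_erase hβ)⟩
  · obtain ⟨z, -, rfl⟩ := Finset.mem_image.mp hβ
    refine Finset.disjoint_left.mpr fun v hv hv' => ?_
    exact (lt_of_mem_bv_freshInstance hv').not_ge (hN v (by
      simp only [Finset.mem_union] at hv ⊢; tauto))

section Instances

variable {w : List ℕ} {Γ : Finset Formula} {σ : Finset ℕ} {y N : ℕ} {φ : Formula}
  (hn : NodeClean ⟨w, Γ, σ⟩) (hχ : .all y φ ∈ Γ)
  (hN : ∀ v ∈ Γ.sup fv ∪ Γ.sup bv ∪ σ, v ≤ N)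
include hn hχ

lemma disjoint_insert_fv_erase_bv {z : ℕ} (hz : z ∈ σ) :
    Disjoint (insert z (φ.fv.erase y)) φ.bv := by
  have hclean := cleanSet_iff.mp (nodeClean_iff.mp hn).1
  refine Finset.disjoint_insert_left.mpr ⟨fun hz' => ?_, ?_⟩
  · exact Finset.disjoint_left.mp ((nodeClean_iff.mp hn).2 _ hχ) hz (Finset.mem_insert_of_mem hz')
  · exact (hclean.2.1 _ hχ _ hχ).mono_right (Finset.subset_insert _ _)

lemma fv_subset_of_mem_instances {α : Formula}
    (hα : α ∈ Γ.erase (.all y φ) ∪ σ.image (freshInstance N φ y)) :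
    α.fv ⊆ Γ.sup fv ∪ σ := by
  rcases Finset.mem_union.mp hα with hα | hα
  · exact (Finset.le_sup (f := fv) (Finset.mem_of_mem_erase hα)).trans
      Finset.subset_union_left
  · obtain ⟨z, hz, rfl⟩ := Finset.mem_image.mp hα
    refine (fv_freshInstance_subset (disjoint_insert_fv_erase_bv hn hχ hz)).trans ?_
    refine Finset.insert_subset (Finset.mem_union_right _ hz) ?_
    exact (Finset.le_sup (f := fv) hχ).trans Finset.subset_union_left

include hN

lemma alphaEq_freshInstance_of_mem {z : ℕ} (hz : z ∈ σ) :
    AlphaEq (freshInstance N φ y z) (φ.subst y z) := by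
  refine alphaEq_freshInstance (disjoint_insert_fv_erase_bv hn hχ hz) (fun v hv => hN v ?_)
    ((cleanSet_iff.mp hn.1).1 _ hχ).1
  rcases Finset.mem_insert.mp hv with rfl | hv
  · simp [hz]
  · exact Finset.mem_union_left _ (Finset.mem_union_left _ (Finset.mem_sup.mpr ⟨_, hχ, hv⟩))

lemma nodeClean_instances :
    NodeClean ⟨w, Γ.erase (.all y φ) ∪ σ.image (freshInstance N φ y), σ⟩ := by
  obtain ⟨huB, -, hpair⟩ := cleanSet_iff.mp hn.1
  have hfresh : ∀ β ∈ Γ, ∀ z, Disjoint β.bv (freshInstance N φ y z).bv :=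
    fun β hβ z => Finset.disjoint_left.mpr fun v hv hv' =>
      (lt_of_mem_bv_freshInstance hv').not_ge (hN v
        (Finset.mem_union_left _ (Finset.mem_union_right _ (Finset.mem_sup.mpr ⟨β, hβ, hv⟩))))
  refine nodeClean_iff.mpr ⟨cleanSet_iff.mpr ⟨fun α hα => ?_, fun α hα β hβ =>
    (disjoint_bv_of_mem_instances hn hN hβ).mono_left (fv_subset_of_mem_instances hn hχ hα),
    fun α hα β hβ hne => ?_⟩,
    fun β hβ => (disjoint_bv_of_mem_instances hn hN hβ).mono_left Finset.subset_union_right⟩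
  · rcases Finset.mem_union.mp hα with hα | hα
    · exact huB α (Finset.mem_of_mem_erase hα)
    · obtain ⟨z, -, rfl⟩ := Finset.mem_image.mp hα
      exact uniqueBinders_freshInstance (huB _ hχ).1
  · rcases Finset.mem_union.mp hα with hα | hα <;> rcases Finset.mem_union.mp hβ with hβ | hβ
    · exact hpair α (Finset.mem_of_mem_erase hα) β (Finset.mem_of_mem_erase hβ) hne
    · obtain ⟨z, -, rfl⟩ := Finset.mem_image.mp hβ
      exact hfresh α (Finset.mem_of_mem_erase hα) z
    · obtain ⟨z, -, rfl⟩ := Finset.mem_image.mp hα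
      exact (hfresh β (Finset.mem_of_mem_erase hβ) z).symm
    · obtain ⟨z, -, rfl⟩ := Finset.mem_image.mp hα
      obtain ⟨z', -, rfl⟩ := Finset.mem_image.mp hβ
      exact disjoint_bv_freshInstance fun h => hne (h ▸ rfl)

end Instances

namespace Formula.Skel

def modalDepth : Skel → ℕ
  | atom => 0
  | neg s | ex s | all s => s.modalDepth
  | and s t | or s t => max s.modalDepth t.modalDepth
  | box s | dia s => s.modalDepth + 1

def exCount : Skel → ℕ
  | atom | box _ | dia _ => 0
  | neg s | all s => s.exCount
  | and s t | or s t => s.exCount + t.exCount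
  | ex s => s.exCount + 1

/-- A universal counts `c` times its body: with `c` variables in scope, `(∀)` replaces it by
at most `c` instances. -/
def weight (c : ℕ) : Skel → ℕ
  | atom | box _ | dia _ => 1
  | neg s | ex s => s.weight c + 1
  | and s t | or s t => s.weight c + t.weight c + 1
  | all s => c * s.weight c + 1

end Formula.Skel

noncomputable def Node.measure (n : Node) : ℕ ×ₗ ℕ ×ₗ ℕ :=
  toLex (n.Γ.sup (·.shape.modalDepth),
    toLex (∑ φ ∈ n.Γ, φ.shape.exCount, ∑ φ ∈ n.Γ, φ.shape.weight n.σ.card))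

lemma LBFpsi.exCount_shape {ψ : Formula} (h : LBFpsi ψ) : ψ.shape.exCount = 0 := by
  refine LBFpsi.rec (motive_1 := fun ψ _ => ψ.shape.exCount = 0) (motive_2 := fun _ _ => True)
    (fun _ _ => rfl) (fun _ _ => rfl) ?_ ?_ (fun _ _ => rfl) (fun _ _ => rfl) (fun _ _ => trivial)
    (fun _ _ _ _ => trivial) (fun _ _ _ _ => trivial) (fun _ _ => trivial) h
  all_goals
    intro _ _ _ _ h₁ h₂
    simp [shape, Skel.exCount, h₁, h₂]

lemma exCount_shape_foldr_all (ψ : Formula) (ys : List ℕ) :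
    (ys.foldr all ψ).shape.exCount = ψ.shape.exCount := by
  induction ys with
  | nil => rfl
  | cons y ys ih => exact ih

section Measure

variable {w w' : List ℕ} {Γ Δ : Finset Formula} {σ σ' : Finset ℕ} {χ : Formula}

lemma sup_erase_union_le (hχ : χ ∈ Γ)
    (hdepth : ∀ δ ∈ Δ, δ.shape.modalDepth ≤ χ.shape.modalDepth) :
    (Γ.erase χ ∪ Δ).sup (·.shape.modalDepth) ≤ Γ.sup (·.shape.modalDepth) := by
  refine Finset.sup_le fun φ hφ => ?_
  rcases Finset.mem_union.mp hφ with hφ | hφ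
  · exact Finset.le_sup (f := (·.shape.modalDepth)) (Finset.mem_of_mem_erase hφ)
  · exact (hdepth φ hφ).trans (Finset.le_sup (f := (·.shape.modalDepth)) hχ)

lemma measure_erase_union_lt_of_exCount (hχ : χ ∈ Γ)
    (hdepth : ∀ δ ∈ Δ, δ.shape.modalDepth ≤ χ.shape.modalDepth)
    (hex : ∑ δ ∈ Δ, δ.shape.exCount < χ.shape.exCount) :
    Node.measure ⟨w', Γ.erase χ ∪ Δ, σ'⟩ < Node.measure ⟨w, Γ, σ⟩ := by
  refine Prod.Lex.toLex_lt_toLex'.mpr ⟨sup_erase_union_le hχ hdepth, fun _ => ?_⟩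
  have := sum_erase_union_add_le (t := Δ) (·.shape.exCount) hχ
  exact Prod.Lex.toLex_lt_toLex.mpr (.inl (by simp only; omega))

lemma measure_erase_union_lt_of_weight (hχ : χ ∈ Γ)
    (hdepth : ∀ δ ∈ Δ, δ.shape.modalDepth ≤ χ.shape.modalDepth)
    (hex : ∑ δ ∈ Δ, δ.shape.exCount ≤ χ.shape.exCount)
    (hweight : ∑ δ ∈ Δ, δ.shape.weight σ.card < χ.shape.weight σ.card) :
    Node.measure ⟨w', Γ.erase χ ∪ Δ, σ⟩ < Node.measure ⟨w, Γ, σ⟩ := by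
  refine Prod.Lex.toLex_lt_toLex'.mpr ⟨sup_erase_union_le hχ hdepth, fun _ => ?_⟩
  have := sum_erase_union_add_le (t := Δ) (·.shape.exCount) hχ
  have := sum_erase_union_add_le (t := Δ) (·.shape.weight σ.card) hχ
  exact Prod.Lex.toLex_lt_toLex'.mpr ⟨by simp only; omega, fun _ => by simp only; omega⟩

lemma measure_lt_of_modalDepth_lt {n n' : Node}
    (h : n'.Γ.sup (·.shape.modalDepth) < n.Γ.sup (·.shape.modalDepth)) :
    n'.measure < n.measure :=
  Prod.Lex.toLex_lt_toLex.mpr (.inl h)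

end Measure

lemma mem_diaBodies {Γ : Finset Formula} {ψ : Formula} : ψ ∈ diaBodies Γ ↔ .dia ψ ∈ Γ := by
  simp only [diaBodies, List.mem_filterMap, Finset.mem_toList]
  constructor
  · rintro ⟨φ, hφ, h⟩
    cases φ <;> simp only [reduceCtorEq, Option.some.injEq] at h
    exact h ▸ hφ
  · exact fun h => ⟨_, h, rfl⟩

lemma mem_boxBodies {Γ : Finset Formula} {ψ : Formula} : ψ ∈ boxBodies Γ ↔ .box ψ ∈ Γ := by
  simp only [boxBodies, List.mem_toFinset, List.mem_filterMap, Finset.mem_toList]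
  constructor
  · rintro ⟨φ, hφ, h⟩
    cases φ <;> simp only [reduceCtorEq, Option.some.injEq] at h
    exact h ▸ hφ
  · exact fun h => ⟨_, h, rfl⟩

lemma NodeClean.replace_single {w w' : List ℕ} {Γ : Finset Formula} {σ σ' E : Finset ℕ}
    {χ δ : Formula} (hn : NodeClean ⟨w, Γ, σ⟩) (hχ : χ ∈ Γ) (hδ : δ.uniqueBinders)
    (hbv : δ.bv ⊆ χ.bv) (hfv : δ.fv ⊆ χ.fv ∪ E) (hE : E ⊆ χ.bv) (hEδ : Disjoint E δ.bv)
    (hσ : σ' ⊆ σ ∪ E) : NodeClean ⟨w', insert δ (Γ.erase χ), σ'⟩ := by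
  rw [← Finset.union_singleton]
  refine hn.replace hχ (fun δ' hδ' => ?_) (fun δ₁ h₁ δ₂ h₂ hne => ?_) hE (fun δ' hδ' => ?_) hσ
  all_goals simp only [Finset.mem_singleton] at *; subst_vars
  exacts [⟨hδ, hbv, hfv⟩, absurd rfl hne, hEδ]

section Rules

variable {w w' : List ℕ} {Γ : Finset Formula} {σ : Finset ℕ}

lemma NodeClean.and_rule {φ ψ : Formula} (hn : NodeClean ⟨w, Γ, σ⟩) (h : .and φ ψ ∈ Γ) :
    NodeClean ⟨w', insert φ (insert ψ (Γ.erase (.and φ ψ))), σ⟩ := by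
  obtain ⟨h₁, h₂, h₃⟩ := (cleanSet_iff.mp hn.1).1 _ h
  rw [insert_insert_erase_eq]
  refine hn.replace (E := ∅) h (fun δ hδ => ?_) (fun δ hδ δ' hδ' hne => ?_)
    (Finset.empty_subset _) (fun _ _ => Finset.disjoint_empty_left _) Finset.subset_union_left
  · simp only [Finset.mem_insert, Finset.mem_singleton] at hδ
    rcases hδ with rfl | rfl
    · exact ⟨h₁, Finset.subset_union_left,
        Finset.subset_union_left.trans Finset.subset_union_left⟩
    · exact ⟨h₂, Finset.subset_union_right,
        Finset.subset_union_right.trans Finset.subset_union_left⟩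
  · simp only [Finset.mem_insert, Finset.mem_singleton] at hδ hδ'
    rcases hδ with rfl | rfl <;> rcases hδ' with rfl | rfl
    exacts [absurd rfl hne, h₃, h₃.symm, absurd rfl hne]

lemma NodeClean.dia_rule {ψ : Formula} (hn : NodeClean ⟨w, Γ, σ⟩) (hψ : .dia ψ ∈ Γ) :
    NodeClean ⟨w', insert ψ (boxBodies Γ), σ⟩ := by
  have hΓ := cleanSet_iff.mp hn.1
  refine hn.of_parent (fun δ => if δ = ψ then .dia ψ else .box δ) ∅ (fun δ hδ => ?_)
    (fun δ _ δ' _ hne hpp => ?_) (fun _ _ => Finset.disjoint_empty_left _)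
    Finset.subset_union_left
  · split_ifs with hδψ
    · subst hδψ
      exact ⟨hψ, hΓ.1 (.dia δ) hψ, subset_rfl, Finset.subset_union_left⟩
    · have hδ := mem_boxBodies.mp ((Finset.mem_insert.mp hδ).resolve_left hδψ)
      exact ⟨hδ, hΓ.1 (.box δ) hδ, subset_rfl, Finset.subset_union_left⟩
  · split_ifs at hpp <;> simp_all

end Rules

lemma Step.nodeClean {n : Node} {cs : List Node} (hs : Step n cs) (hn : NodeClean n) :
    ∀ c ∈ cs, NodeClean c := by
  have hΓ := cleanSet_iff.mp hn.1
  cases hs with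
  | and h =>
    simp only [List.mem_singleton, forall_eq]
    exact hn.and_rule h
  | orL h =>
    simp only [List.mem_singleton, forall_eq]
    exact hn.replace_single (E := ∅) h (hΓ.1 _ h).1 Finset.subset_union_left
      (Finset.subset_union_left.trans Finset.subset_union_left) (Finset.empty_subset _)
      (Finset.disjoint_empty_left _) Finset.subset_union_left
  | orR h =>
    simp only [List.mem_singleton, forall_eq]
    exact hn.replace_single (E := ∅) h (hΓ.1 _ h).2.1 Finset.subset_union_right
      (Finset.subset_union_right.trans Finset.subset_union_left) (Finset.empty_subset _)
      (Finset.disjoint_empty_left _) Finset.subset_union_left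
  | @exis w Γ σ x φ h =>
    simp only [List.mem_singleton, forall_eq]
    refine hn.replace_single (E := {x}) h (hΓ.1 _ h).1 (Finset.subset_insert _ _) ?_
      (by simp [bv]) (Finset.disjoint_singleton_left.mpr (hΓ.1 _ h).2)
      (by rw [Finset.union_singleton])
    rw [Finset.union_singleton]
    exact Finset.insert_erase_subset x φ.fv
  | alls _ _ _ _ hclean hσ =>
    simp only [List.mem_singleton, forall_eq]
    exact ⟨hclean, hσ⟩
  | diam =>
    intro c hc
    obtain ⟨⟨i, ψ⟩, hmem, rfl⟩ := List.mem_map.mp hc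
    exact hn.dia_rule (mem_diaBodies.mp (List.of_mem_zip hmem).2)
  | fin hmod hnd hbox =>
    simp only [List.mem_singleton, forall_eq]
    refine hn.of_parent id ∅ (fun δ hδ => ?_) (fun δ _ δ' _ hne hpp => absurd hpp hne)
      (fun _ _ => Finset.disjoint_empty_left _) Finset.subset_union_left
    have hδ := Finset.mem_of_mem_filter δ hδ
    exact ⟨hδ, hΓ.1 _ hδ, subset_rfl, Finset.subset_union_left⟩

lemma Step.lbf {n : Node} {cs : List Node} (hs : Step n cs) (hn : ∀ φ ∈ n.Γ, LBFalpha φ) :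
    ∀ c ∈ cs, ∀ φ ∈ c.Γ, LBFalpha φ := by
  have hold : ∀ {χ φ}, φ ∈ n.Γ.erase χ → LBFalpha φ := fun hφ => hn _ (Finset.mem_of_mem_erase hφ)
  cases hs with
  | and h =>
    simp only [List.mem_singleton, forall_eq, Finset.mem_insert, forall_eq_or_imp]
    exact ⟨(hn _ h).and_inv.1, (hn _ h).and_inv.2, fun _ => hold⟩
  | orL h =>
    simp only [List.mem_singleton, forall_eq, Finset.mem_insert, forall_eq_or_imp]
    exact ⟨(hn _ h).or_inv.1, fun _ => hold⟩
  | orR h =>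
    simp only [List.mem_singleton, forall_eq, Finset.mem_insert, forall_eq_or_imp]
    exact ⟨(hn _ h).or_inv.2, fun _ => hold⟩
  | exis h =>
    simp only [List.mem_singleton, forall_eq, Finset.mem_insert, forall_eq_or_imp]
    exact ⟨(hn _ h).ex_inv, fun _ => hold⟩
  | alls f h _ hα =>
    simp only [List.mem_singleton, forall_eq, Finset.mem_union, Finset.mem_image]
    rintro φ (hφ | ⟨z, hz, rfl⟩)
    · exact hold hφ
    · obtain ⟨ys, ψ, rfl, hψ⟩ := (hn _ h).all_inv
      exact (LBFalpha.foldr_all hψ ys).of_shape_eq ((hα z hz).shape_eq.trans (shape_subst _ _ _))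
  | diam =>
    intro c hc
    obtain ⟨⟨i, ψ⟩, hmem, rfl⟩ := List.mem_map.mp hc
    simp only [Finset.mem_insert, forall_eq_or_imp]
    exact ⟨(hn _ (mem_diaBodies.mp (List.of_mem_zip hmem).2)).dia_inv,
      fun φ hφ => (hn _ (mem_boxBodies.mp hφ)).box_inv⟩
  | fin =>
    simp only [List.mem_singleton, forall_eq]
    exact fun φ hφ => hn φ (Finset.mem_of_mem_filter φ hφ)

def Node.IsCleanLBF (n : Node) : Prop := NodeClean n ∧ ∀ φ ∈ n.Γ, LBFalpha φ

lemma Step.isCleanLBF {n : Node} {cs : List Node} (hs : Step n cs) (hn : n.IsCleanLBF) :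
    ∀ c ∈ cs, c.IsCleanLBF :=
  fun c hc => ⟨hs.nodeClean hn.1 c hc, hs.lbf hn.2 c hc⟩

def Node.HasDecreasingStep (n : Node) : Prop :=
  ∃ cs, Step n cs ∧ ∀ c ∈ cs, c.measure < n.measure

section Progress

variable {w : List ℕ} {Γ : Finset Formula} {σ : Finset ℕ}

lemma hasDecreasingStep_of_and_mem {φ ψ : Formula} (h : .and φ ψ ∈ Γ) :
    Node.HasDecreasingStep ⟨w, Γ, σ⟩ := by
  refine ⟨_, .and h, ?_⟩
  simp only [List.mem_singleton, forall_eq, insert_insert_erase_eq]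
  have hex := sum_pair_le (·.shape.exCount) φ ψ
  have hweight := sum_pair_le (·.shape.weight σ.card) φ ψ
  refine measure_erase_union_lt_of_weight h (fun δ hδ => ?_) hex
    (by simp only [shape, Skel.weight] at hweight ⊢; omega)
  simp only [Finset.mem_insert, Finset.mem_singleton] at hδ
  rcases hδ with rfl | rfl <;> simp [shape, Skel.modalDepth]

lemma hasDecreasingStep_of_or_mem {φ ψ : Formula} (h : .or φ ψ ∈ Γ) :
    Node.HasDecreasingStep ⟨w, Γ, σ⟩ := by
  refine ⟨_, .orL h, ?_⟩
  simp only [List.mem_singleton, forall_eq, ← Finset.union_singleton]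
  exact measure_erase_union_lt_of_weight h (by simp [shape, Skel.modalDepth])
    (by simp [shape, Skel.exCount]) (by simp [shape, Skel.weight])

lemma hasDecreasingStep_of_ex_mem {x : ℕ} {φ : Formula} (h : .ex x φ ∈ Γ) :
    Node.HasDecreasingStep ⟨w, Γ, σ⟩ := by
  refine ⟨_, .exis h, ?_⟩
  simp only [List.mem_singleton, forall_eq, ← Finset.union_singleton]
  exact measure_erase_union_lt_of_exCount h (by simp [shape, Skel.modalDepth])
    (by simp [shape, Skel.exCount])

lemma hasDecreasingStep_of_all_mem {y : ℕ} {φ : Formula} (hn : NodeClean ⟨w, Γ, σ⟩)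
    (h : .all y φ ∈ Γ)
    (hlbf : LBFalpha (.all y φ)) (hsafe : ExSafe (Γ.erase (.all y φ))) :
    Node.HasDecreasingStep ⟨w, Γ, σ⟩ := by
  obtain ⟨N, hN⟩ : ∃ N, ∀ v ∈ Γ.sup fv ∪ Γ.sup bv ∪ σ, v ≤ N :=
    ⟨_, fun v hv => Finset.le_sup (f := id) hv⟩
  have hclean := nodeClean_instances hn h hN
  refine ⟨_, .alls (freshInstance N φ y) h hsafe
    (fun z hz => alphaEq_freshInstance_of_mem hn h hN hz) hclean.1 hclean.2, ?_⟩
  simp only [List.mem_singleton, forall_eq]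
  have hex : φ.shape.exCount = 0 := by
    obtain ⟨ys, ψ, rfl, hψ⟩ := hlbf.all_inv
    exact (exCount_shape_foldr_all ψ ys).trans hψ.exCount_shape
  refine measure_erase_union_lt_of_weight h (fun δ hδ => ?_) ?_ ?_
  · obtain ⟨z, -, rfl⟩ := Finset.mem_image.mp hδ
    simp [shape, Skel.modalDepth]
  · simp [hex, shape, Skel.exCount]
  · have : ∑ δ ∈ σ.image (freshInstance N φ y), δ.shape.weight σ.card ≤
        σ.card * φ.shape.weight σ.card :=
      (Finset.sum_image_le_of_nonneg fun _ _ => Nat.zero_le _).trans (by simp)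
    simp only [shape, Skel.weight]
    omega

lemma hasDecreasingStep_of_dia_mem {ψ : Formula} (hmod : ∀ φ ∈ Γ, φ.isModuleB = true)
    (h : .dia ψ ∈ Γ) :
    Node.HasDecreasingStep ⟨w, Γ, σ⟩ := by
  have hne : diaBodies Γ ≠ [] := List.ne_nil_of_mem (mem_diaBodies.mpr h)
  refine ⟨_, .diam hmod hne, fun c hc => measure_lt_of_modalDepth_lt ?_⟩
  obtain ⟨⟨i, ψ'⟩, hmem, rfl⟩ := List.mem_map.mp hc
  have hψ' := mem_diaBodies.mp (List.of_mem_zip hmem).2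
  have hpos : ⊥ < Γ.sup (·.shape.modalDepth) :=
    lt_of_lt_of_le (by simp [shape, Skel.modalDepth]) (Finset.le_sup (f := (·.shape.modalDepth)) h)
  refine (Finset.sup_lt_iff hpos).mpr fun δ hδ => ?_
  rcases Finset.mem_insert.mp hδ with rfl | hδ
  · exact lt_of_lt_of_le (by simp [shape, Skel.modalDepth])
      (Finset.le_sup (f := (·.shape.modalDepth)) hψ')
  · exact lt_of_lt_of_le (by simp [shape, Skel.modalDepth])
      (Finset.le_sup (f := (·.shape.modalDepth)) (mem_boxBodies.mp hδ))

lemma hasDecreasingStep_of_box_mem {β : Formula} (hmod : ∀ φ ∈ Γ, φ.isModuleB = true)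
    (hdia : ∀ ψ, .dia ψ ∉ Γ) (h : .box β ∈ Γ) :
    Node.HasDecreasingStep ⟨w, Γ, σ⟩ := by
  have hnd : diaBodies Γ = [] := List.eq_nil_iff_forall_not_mem.mpr fun ψ hψ =>
    hdia ψ (mem_diaBodies.mp hψ)
  have hbox : boxBodies Γ ≠ ∅ := Finset.ne_empty_of_mem (mem_boxBodies.mpr h)
  refine ⟨_, .fin hmod hnd hbox, ?_⟩
  simp only [List.mem_singleton, forall_eq]
  refine measure_lt_of_modalDepth_lt (lt_of_le_of_lt ?_ (lt_of_lt_of_le (Nat.succ_pos _)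
    (Finset.le_sup (f := (·.shape.modalDepth)) h)))
  refine Finset.sup_le fun φ hφ => ?_
  have hlit := (Finset.mem_filter.mp hφ).2
  cases φ with
  | atom => rfl
  | neg χ => cases χ <;> simp_all [isLiteralB, shape, Skel.modalDepth]
  | _ => simp [isLiteralB] at hlit

end Progress

/-- The rules are tried in the order `(∧)`, `(∨)`, `(∃)`, `(∀)`, `(◇)`, `(END)`: once no
`∧`, `∨`, `∃` is left, the side formulas of a universal are Existential-safe. -/
theorem Node.IsCleanLBF.literals_or_hasDecreasingStep {n : Node} (hn : n.IsCleanLBF) :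
    (∀ φ ∈ n.Γ, φ.isLiteralB = true) ∨ n.HasDecreasingStep := by
  obtain ⟨w, Γ, σ⟩ := n
  obtain ⟨hclean, hlbf⟩ := hn
  by_cases hand : ∃ a b, .and a b ∈ Γ
  · obtain ⟨a, b, h⟩ := hand
    exact .inr (hasDecreasingStep_of_and_mem h)
  by_cases hor : ∃ a b, .or a b ∈ Γ
  · obtain ⟨a, b, h⟩ := hor
    exact .inr (hasDecreasingStep_of_or_mem h)
  by_cases hex : ∃ x φ, .ex x φ ∈ Γ
  · obtain ⟨x, φ, h⟩ := hex
    exact .inr (hasDecreasingStep_of_ex_mem h)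
  push Not at hand hor hex
  by_cases hall : ∃ y φ, .all y φ ∈ Γ
  · obtain ⟨y, φ, h⟩ := hall
    have hsafe := exSafe_of_lbf hlbf hand hor hex
    exact .inr (hasDecreasingStep_of_all_mem hclean h (hlbf _ h)
      fun φ hφ => hsafe φ (Finset.mem_of_mem_erase hφ))
  push Not at hall
  have hmod := isModuleB_of_lbf hlbf hand hor hex hall
  by_cases hdia : ∃ ψ, .dia ψ ∈ Γ
  · obtain ⟨ψ, h⟩ := hdia
    exact .inr (hasDecreasingStep_of_dia_mem hmod h)
  push Not at hdia
  by_cases hbox : ∃ β, .box β ∈ Γ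
  · obtain ⟨β, h⟩ := hbox
    exact .inr (hasDecreasingStep_of_box_mem hmod hdia h)
  push Not at hbox
  exact .inl fun φ hφ => isLiteralB_of_isModuleB (hmod φ hφ)
    (fun χ he => hbox χ (he ▸ hφ)) (fun χ he => hdia χ (he ▸ hφ))

lemma Step.ne_nil {n : Node} {cs : List Node} (hs : Step n cs) : cs ≠ [] := by
  cases hs with
  | diam _ hne => simpa [List.map_eq_nil_iff] using hne
  | _ => simp

lemma saturated_mk {n : Node} {k : ℕ} {ts : Fin (k + 1) → Tab} (h : ∀ i, Saturated (ts i)) :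
    Saturated (.mk n (k + 1) ts) := by
  intro s hsub hleaf
  cases hsub with
  | refl => exact absurd hleaf (Nat.succ_ne_zero k)
  | child i hsub => exact h i s hsub hleaf

lemma Subtree.isCleanLBF {t s : Tab} (hsub : Subtree t s) (ht : t.WF)
    (hroot : t.label.IsCleanLBF) : s.WF ∧ s.label.IsCleanLBF := by
  induction hsub with
  | refl => exact ⟨ht, hroot⟩
  | @child n k ts s i _ ih =>
    cases k with
    | zero => exact i.elim0
    | succ k =>
      refine ih (ht.2 i) (ht.1.isCleanLBF hroot _ ?_)
      exact List.mem_map_of_mem (List.mem_ofFn.mpr ⟨i, rfl⟩)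

lemma Node.IsCleanLBF.exists_saturated {n : Node} (hn : n.IsCleanLBF) :
    ∃ t : Tab, t.WF ∧ t.label = n ∧ Saturated t := by
  induction n using (InvImage.wf Node.measure wellFounded_lt).induction with
  | _ n ih =>
  rcases hn.literals_or_hasDecreasingStep with hlit | ⟨cs, hs, hlt⟩
  · refine ⟨.mk n 0 Fin.elim0, trivial, rfl, fun s hsub _ => ?_⟩
    cases hsub with
    | refl => exact hlit
    | child i => exact i.elim0
  · obtain ⟨c, cs, rfl⟩ := List.exists_cons_of_ne_nil hs.ne_nil
    choose ts hts using fun i : Fin (c :: cs).length =>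
      ih _ (hlt _ (List.get_mem _ i)) (hs.isCleanLBF hn _ (List.get_mem _ i))
    have hlabels : (List.ofFn ts).map Tab.label = c :: cs := by
      rw [List.map_ofFn, show Tab.label ∘ ts = (c :: cs).get from funext fun i => (hts i).2.1,
        List.ofFn_get]
    exact ⟨.mk n _ ts, ⟨hlabels ▸ hs, fun i => (hts i).1⟩, rfl, saturated_mk fun i => (hts i).2.2⟩

lemma Tab.exists_saturated_extension (t : Tab) (ht : t.WF) (hroot : t.label.IsCleanLBF) :
    ∃ t' : Tab, t'.WF ∧ t'.label = t.label ∧ Extends t' t ∧ Saturated t' := by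
  induction t with
  | mk n k ts ih =>
  cases k with
  | zero =>
    obtain ⟨t', hwf, hlabel, hsat⟩ := hroot.exists_saturated
    exact ⟨t', hwf, hlabel, .leaf hlabel, hsat⟩
  | succ k =>
    obtain ⟨hs, hwf⟩ := ht
    choose ts' hts' using fun i => ih i (hwf i)
      (hs.isCleanLBF hroot _ (List.mem_map_of_mem (List.mem_ofFn.mpr ⟨i, rfl⟩)))
    have hlabels : (List.ofFn ts').map Tab.label = (List.ofFn ts).map Tab.label := by
      simp only [List.map_ofFn]
      exact congrArg List.ofFn (funext fun i => (hts' i).2.1)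
    exact ⟨.mk n (k + 1) ts', ⟨hlabels ▸ hs, fun i => (hts' i).1⟩, rfl,
      .node fun i => (hts' i).2.2.1, saturated_mk fun i => (hts' i).2.2.2⟩

/-- In the tableau system for LBF, for every (well-formed)
tableau whose root node is clean and consists of LBF formulas, every leaf node
either contains only literals or admits the application of at least one
tableau rule.  Consequently every partial tableau for an LBF formula can be
extended to a saturated tableau. -/
theorem lbf_tableau_rule_applicable :
    (∀ t : Tab, t.WF → NodeClean t.label → (∀ φ ∈ t.label.Γ, LBFalpha φ) →
      ∀ s : Tab, Subtree t s → s.isLeaf →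
        (∀ φ ∈ s.label.Γ, φ.isLiteralB = true) ∨ ∃ cs, Step s.label cs) ∧
    (∀ t : Tab, t.WF → NodeClean t.label → (∀ φ ∈ t.label.Γ, LBFalpha φ) →
      ∃ t' : Tab, t'.WF ∧ Extends t' t ∧ Saturated t') := by
  refine ⟨fun t ht hclean hlbf s hsub _ => ?_, fun t ht hclean hlbf => ?_⟩
  · have hs := (hsub.isCleanLBF ht ⟨hclean, hlbf⟩).2
    exact hs.literals_or_hasDecreasingStep.imp_right fun ⟨cs, hcs, _⟩ => ⟨cs, hcs⟩
  · obtain ⟨t', ht', -, hext, hsat⟩ := t.exists_saturated_extension ht ⟨hclean, hlbf⟩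
    exact ⟨t', ht', hext, hsat⟩
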